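/- arXiv:2601.09950 — 2 statements merged into one kernel-verified Lean document; each statement's English description precedes it below -/
import Mathlib

section
/- Let (Ω, F, P) be a probability space, k ≥ 1, and for 1 ≤ i ≤ k let A_i and A'_i be events with A'_i ⊆ A_i, P(A_i) ≤ (1+ε) P(A'_i), and the family (A'_i)_{i=1}^k mutually independent with each event of the form A_i ∩ (A'_i)ᶜ independent of σ(A'_1, …, A'_{i-1}). Set B_k = ⋂_{i=1}^k A_i and B'_k = ⋂_{i=1}^k A'_i. Then P(B_k) ≤ (1+ε) P(B'_k) + P(B_{k-1} ∩ (B'_{k-1})ᶜ), where B_0 = B'_0 = Ω. -/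
open MeasureTheory ProbabilityTheory

/-- Abstract decomposition (ab1)–(abA): with `A'_i ⊆ A_i`, `P(A_i) ≤ (1+ε)P(A'_i)`,
the `A'_i` mutually independent and each `A_i ∩ (A'_i)ᶜ` independent of
`σ(A'_1, …, A'_{i-1})`, setting `B_n = ⋂_{i=1}^n A_i` and `B'_n = ⋂_{i=1}^n A'_i`,
`P(B_k) ≤ (1+ε) P(B'_k) + P(B_{k-1} ∩ (B'_{k-1})ᶜ)`. -/
theorem decomposition_step {Ω : Type*} [m0 : MeasurableSpace Ω] (μ : Measure Ω)
    [IsProbabilityMeasure μ] (k : ℕ) (hk : 1 ≤ k) (A A' : ℕ → Set Ω) (ε : ℝ) (hε : 0 < ε)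
    (hmeas : ∀ i ∈ Finset.Icc 1 k, MeasurableSet (A i))
    (hmeas' : ∀ i ∈ Finset.Icc 1 k, MeasurableSet (A' i))
    (hsub : ∀ i ∈ Finset.Icc 1 k, A' i ⊆ A i)
    (hcomp : ∀ i ∈ Finset.Icc 1 k, μ (A i) ≤ ENNReal.ofReal (1 + ε) * μ (A' i))
    (hindep : iIndepSet (fun i : Fin k => A' (i.1 + 1)) μ)
    (hindep2 : ∀ i ∈ Finset.Icc 1 k,
      Indep (MeasurableSpace.generateFrom {s | ∃ j ∈ Finset.Ico 1 i, s = A' j})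
            (MeasurableSpace.generateFrom {A i ∩ (A' i)ᶜ}) μ) :
    μ (⋂ i ∈ Finset.Icc 1 k, A i) ≤
      ENNReal.ofReal (1 + ε) * μ (⋂ i ∈ Finset.Icc 1 k, A' i) +
        μ ((⋂ i ∈ Finset.Icc 1 (k - 1), A i) ∩ (⋂ i ∈ Finset.Icc 1 (k - 1), A' i)ᶜ) := by
  have hIccIco : Finset.Icc 1 (k - 1) = Finset.Ico 1 k := by
    ext i; simp [Finset.mem_Icc, Finset.mem_Ico]; omega
  have hkmem : k ∈ Finset.Icc 1 k := by simp [hk]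
  set B := ⋂ i ∈ Finset.Icc 1 (k - 1), A i with hB
  set B' := ⋂ i ∈ Finset.Icc 1 (k - 1), A' i with hB'
  have hinsert : Finset.Icc 1 k = insert k (Finset.Icc 1 (k - 1)) := by
    ext i; simp [Finset.mem_Icc, Finset.mem_insert]; omega
  have hBk : (⋂ i ∈ Finset.Icc 1 k, A i) = A k ∩ B := by
    rw [hinsert, Finset.set_biInter_insert]
  have hB'k : (⋂ i ∈ Finset.Icc 1 k, A' i) = A' k ∩ B' := by
    rw [hinsert, Finset.set_biInter_insert]
  -- measurability
  have hmB' : MeasurableSet B' := by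
    apply Finset.measurableSet_biInter
    intro i hi
    exact hmeas' i (by rw [hinsert]; exact Finset.mem_insert_of_mem hi)
  have hmAk : MeasurableSet (A k) := hmeas k hkmem
  have hmA'k : MeasurableSet (A' k) := hmeas' k hkmem
  -- step 1 : inclusion
  have hsubset : (⋂ i ∈ Finset.Icc 1 k, A i) ⊆ (A k ∩ B') ∪ (B ∩ B'ᶜ) := by
    rw [hBk]
    intro x hx
    by_cases h : x ∈ B'
    · exact Or.inl ⟨hx.1, h⟩
    · exact Or.inr ⟨hx.2, h⟩
  have step1 : μ (⋂ i ∈ Finset.Icc 1 k, A i) ≤ μ (A k ∩ B') + μ (B ∩ B'ᶜ) :=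
    le_trans (measure_mono hsubset) (measure_union_le _ _)
  -- step 2 : split A k ∩ B'
  have hsplit : A k ∩ B' = (A' k ∩ B') ∪ ((A k ∩ (A' k)ᶜ) ∩ B') := by
    rw [← Set.union_inter_distrib_right]
    congr 1
    rw [Set.union_comm, ← Set.diff_eq, Set.diff_union_self,
      Set.union_eq_self_of_subset_right (hsub k hkmem)]
  have hdisj : Disjoint (A' k ∩ B') ((A k ∩ (A' k)ᶜ) ∩ B') := by
    apply Set.disjoint_left.mpr
    rintro x ⟨hx1, -⟩ ⟨⟨-, hx2⟩, -⟩
    exact hx2 hx1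
  have step2 : μ (A k ∩ B') = μ (A' k ∩ B') + μ ((A k ∩ (A' k)ᶜ) ∩ B') := by
    rw [hsplit, measure_union hdisj (((hmAk.inter hmA'k.compl)).inter hmB')]
  -- independence for the second term
  have hBico : B' = ⋂ j ∈ Finset.Ico 1 k, A' j := by rw [hB', hIccIco]
  have hindAB : μ ((A k ∩ (A' k)ᶜ) ∩ B') = μ (A k ∩ (A' k)ᶜ) * μ B' := by
    have h := (Indep_iff _ _ _).1 (hindep2 k hkmem) B' (A k ∩ (A' k)ᶜ) ?_ ?_
    · rw [Set.inter_comm] at h; rw [h, mul_comm]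
    · rw [hBico]
      apply Finset.measurableSet_biInter
      intro j hj
      exact MeasurableSpace.measurableSet_generateFrom ⟨j, hj, rfl⟩
    · exact MeasurableSpace.measurableSet_generateFrom rfl
  -- bound on μ (A k ∩ (A' k)ᶜ)
  have hfin : μ (A' k) ≠ ⊤ := measure_ne_top μ _
  have hdiffmeas : μ (A k ∩ (A' k)ᶜ) ≤ ENNReal.ofReal ε * μ (A' k) := by
    rw [← Set.diff_eq, measure_diff (hsub k hkmem) hmA'k.nullMeasurableSet hfin]
    rw [tsub_le_iff_right]
    calc μ (A k) ≤ ENNReal.ofReal (1 + ε) * μ (A' k) := hcomp k hkmem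
      _ = ENNReal.ofReal ε * μ (A' k) + μ (A' k) := by
        rw [ENNReal.ofReal_add (by norm_num) hε.le, ENNReal.ofReal_one, add_comm,
          add_mul, one_mul]
  -- product formula
  have hkm : k - 1 < k := by omega
  have hprod : μ (A' k ∩ B') = μ (A' k) * μ B' := by
    have h1 := hindep.meas_biInter Finset.univ
    have h2 := hindep.meas_biInter (Finset.univ.erase ⟨k - 1, hkm⟩)
    have hset1 : (⋂ i ∈ (Finset.univ : Finset (Fin k)), A' (i.1 + 1))
        = ⋂ i ∈ Finset.Icc 1 k, A' i := by
      ext x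
      simp only [Set.mem_iInter, Finset.mem_univ, true_implies, Finset.mem_Icc, and_imp]
      constructor
      · intro h j hj1 hj2
        have := h ⟨j - 1, by omega⟩
        simpa [Nat.sub_add_cancel hj1] using this
      · intro h i
        exact h (i.1 + 1) (Nat.succ_le_succ (Nat.zero_le _)) i.2
    have hset2 : (⋂ i ∈ Finset.univ.erase (⟨k - 1, hkm⟩ : Fin k), A' (i.1 + 1)) = B' := by
      rw [hB']
      ext x
      simp only [Set.mem_iInter, Finset.mem_erase, Finset.mem_univ, and_true,
        Finset.mem_Icc, and_imp, ne_eq, Fin.ext_iff]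
      constructor
      · intro h j hj1 hj2
        have := h ⟨j - 1, by omega⟩ (by simp; omega)
        simpa [Nat.sub_add_cancel hj1] using this
      · intro h i hi
        have hik := i.2
        exact h (i.1 + 1) (Nat.succ_le_succ (Nat.zero_le _)) (by omega)
    rw [← hB'k, ← hset1, h1,
      ← Finset.mul_prod_erase Finset.univ _ (Finset.mem_univ (⟨k - 1, hkm⟩ : Fin k)),
      ← h2, hset2]
    show μ (A' (k - 1 + 1)) * μ B' = μ (A' k) * μ B'
    rw [Nat.sub_add_cancel hk]
  calc μ (⋂ i ∈ Finset.Icc 1 k, A i)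
      ≤ μ (A k ∩ B') + μ (B ∩ B'ᶜ) := step1
    _ = μ (A' k ∩ B') + μ ((A k ∩ (A' k)ᶜ) ∩ B') + μ (B ∩ B'ᶜ) := by rw [step2]
    _ ≤ μ (A' k ∩ B') + ENNReal.ofReal ε * (μ (A' k) * μ B') + μ (B ∩ B'ᶜ) := by
        gcongr
        calc μ (A k ∩ (A' k)ᶜ ∩ B') = μ (A k ∩ (A' k)ᶜ) * μ B' := hindAB
          _ ≤ ENNReal.ofReal ε * μ (A' k) * μ B' := mul_le_mul_left hdiffmeas _
          _ = _ := by rw [mul_assoc]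
    _ = (1 + ENNReal.ofReal ε) * μ (A' k ∩ B') + μ (B ∩ B'ᶜ) := by
        rw [← hprod, one_add_mul]
    _ = ENNReal.ofReal (1 + ε) * μ (⋂ i ∈ Finset.Icc 1 k, A' i) + μ (B ∩ B'ᶜ) := by
        rw [hB'k, ENNReal.ofReal_add (by norm_num) hε.le, ENNReal.ofReal_one]
end

section
/- Let G be an infinite, connected, locally finite graph, p > p_c^{site}(G), and S ⊆ V. Suppose that for every ε, c with c = 1 - ((1-p)/(1-p_1))^{1-ε'} (for some p_1 ∈ (p_c, p), ε' ∈ (0,1)) and every δ ∈ (0,1), the (p, δ, c)-packing number PK_{p,δ,c}(S) is at least k. Then P_p(S ↮ ∞) ≤ δ(1-c)/c + (1+δ)(1-c)^k. -/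
open MeasureTheory
open scoped ENNReal

namespace Percolation

variable {V : Type*}

/-- The open subgraph of `G` determined by a site configuration `ω : V → Bool`:
an edge is open iff both endpoints are open sites. -/
def openGraph (G : SimpleGraph V) (ω : V → Bool) : SimpleGraph V where
  Adj u w := G.Adj u w ∧ ω u = true ∧ ω w = true
  symm := ⟨fun u w ⟨h, hu, hw⟩ => ⟨h.symm, hw, hu⟩⟩
  loopless := ⟨fun u ⟨h, _, _⟩ => G.irrefl h⟩

/-- The restriction of `G` to a vertex set `A` (edges with both endpoints in `A`). -/
def restrictGraph (G : SimpleGraph V) (A : Set V) : SimpleGraph V where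
  Adj u w := G.Adj u w ∧ u ∈ A ∧ w ∈ A
  symm := ⟨fun u w ⟨h, hu, hw⟩ => ⟨h.symm, hw, hu⟩⟩
  loopless := ⟨fun u ⟨h, _, _⟩ => G.irrefl h⟩

/-- `v` lies in an infinite open cluster of `G` in configuration `ω`. -/
def ConnInfty (G : SimpleGraph V) (ω : V → Bool) (v : V) : Prop :=
  ω v = true ∧ {u | (openGraph G ω).Reachable v u}.Infinite

/-- `v` is joined to some vertex of `T` by an open path all of whose vertices lie in `A`. -/
def ConnWithin (G : SimpleGraph V) (A : Set V) (ω : V → Bool) (v : V) (T : Set V) : Prop :=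
  ∃ u ∈ T, (openGraph (restrictGraph G A) ω).Reachable v u

/-- The ball of radius `D` about `v` for the graph distance of `G`. -/
def ball (G : SimpleGraph V) (v : V) (D : ℕ) : Set V :=
  {u | G.Reachable v u ∧ G.dist v u ≤ D}

/-- The inner vertex boundary of the ball `B(v,D)`. -/
def innerBoundary (G : SimpleGraph V) (v : V) (D : ℕ) : Set V :=
  {u | u ∈ ball G v D ∧ ∃ w, G.Adj u w ∧ w ∉ ball G v D}

/-- `μ` is the law of i.i.d. Bernoulli(`p`) site percolation: every finite-dimensional
cylinder has the product probability. -/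
def IsBernoulli (p : ℝ) [MeasurableSpace (V → Bool)] (μ : Measure (V → Bool)) : Prop :=
  ∀ (F : Finset V) (b : V → Bool),
    μ {ω | ∀ v ∈ F, ω v = b v} =
      ∏ v ∈ F, ENNReal.ofReal (if b v then p else 1 - p)

/-- Interior vertices of `S`: vertices all of whose neighbors lie in `S`. -/
def interior (G : SimpleGraph V) (S : Set V) : Set V :=
  {v ∈ S | ∀ u, G.Adj v u → u ∈ S}

/-- The event `{v ↔ ∂_V y through S°}`: `v` is joined to a neighbor of `y` by an open path
visiting only interior vertices of `S`. -/
def ConnToNbhd (G : SimpleGraph V) (S : Set V) (v y : V) (ω : V → Bool) : Prop :=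
  ∃ x, G.Adj y x ∧ (openGraph (restrictGraph G (interior G S)) ω).Reachable v x

open scoped Classical in
/-- The functional `φ_p^v(S)` of ZL24, with `P_p` given by the measure `μ`. -/
noncomputable def phi (G : SimpleGraph V) [MeasurableSpace (V → Bool)]
    (μ : Measure (V → Bool)) (v : V) (S : Finset V) : ℝ≥0∞ :=
  ∑ y ∈ S.filter (fun y => ∃ x, G.Adj y x ∧ x ∉ S),
    μ {ω | ConnToNbhd G (↑S) v y ω}

/-- The critical probability of Bernoulli site percolation on `G`. -/
noncomputable def pcSite (G : SimpleGraph V) [MeasurableSpace (V → Bool)] : ℝ :=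
  sSup {p : ℝ | p ∈ Set.Icc (0:ℝ) 1 ∧
    ∀ μ : Measure (V → Bool), IsProbabilityMeasure μ → IsBernoulli p μ →
      ∀ v : V, μ {ω | ConnInfty G ω v} = 0}

/-- The punctured graph `G_{i}`: `G` with the balls `B(w_j, D_j)`, `j < i`, removed. -/
def punctured (G : SimpleGraph V) {k : ℕ} (w : Fin k → V) (D : Fin k → ℕ) (i : ℕ) :
    SimpleGraph V :=
  restrictGraph G (⋃ j ∈ {j : Fin k | (j : ℕ) < i}, ball G (w j) (D j))ᶜ

/-- A `(p,δ,c)`-packing of size `k` in `S` (Definition of the packing number): well-separated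
vertices `w_i ∈ S` with radii `D_i` such that in the punctured graph `G_{i-1}` the
disconnection from `∂_in B(w_i,D_i)` compares to the disconnection from `∞` within a
factor `1+δ`, and `w_i` connects to `∞` with probability at least `c`. -/
def IsPacking (G : SimpleGraph V) [MeasurableSpace (V → Bool)]
    (μ : Measure (V → Bool)) (δ c : ℝ) (S : Set V) (k : ℕ)
    (w : Fin k → V) (D : Fin k → ℕ) : Prop :=
  (∀ i, w i ∈ S) ∧
  (∀ i : Fin k, w i ∉ ⋃ j ∈ {j : Fin k | (j : ℕ) < (i : ℕ)}, ball G (w j) (D j)) ∧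
  (∀ i : Fin k,
    μ {ω | ¬ ConnWithin (punctured G w D i) (ball G (w i) (D i)) ω (w i)
        (innerBoundary G (w i) (D i))} ≤
      μ {ω | ¬ ConnInfty (punctured G w D i) ω (w i)} ∧
    μ {ω | ¬ ConnInfty (punctured G w D i) ω (w i)} ≤
      ENNReal.ofReal (1 + δ) *
        μ {ω | ¬ ConnWithin (punctured G w D i) (ball G (w i) (D i)) ω (w i)
          (innerBoundary G (w i) (D i))} ∧
    ENNReal.ofReal c ≤ μ {ω | ConnInfty (punctured G w D i) ω (w i)})


/-!
Index the packing from `0`. Let `R_i = ⋃_{j<i} B(w_j, D_j)` (`removedSet`), let `A_j`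
(`disconnBall`) be the event that `w_j` does not reach `∂_in B(w_j, D_j)` inside the ball in
`G \ R_j`, `E_j ⊇ A_j` (`disconnInfty`) the event `w_j ↮ ∞` in `G \ R_j`, and
`C_i = ⋂_{j<i} A_j` (`chainEvent`). The events `A_j` and `E_j` only look at sites outside `R_j`,
whereas `C_j` only looks at sites of `R_j`, so under the product measure both are independent of
`C_j`; for `E_j`, which is not determined by finitely many sites,
this follows by monotone approximation with the events "the open cluster of `w_j` stays in
`B(w_j, n)`". Since `w_j ∈ S`,
  `{S ↮ ∞} ⊆ ⋂_j E_j ⊆ C_k ∪ ⋃_j (E_j \ A_j) ∩ C_j`,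
where `P(C_k) ≤ (1-c)^k` and `P((E_j \ A_j) ∩ C_j) = (P(E_j) - P(A_j)) P(C_j) ≤ δ (1-c)^{j+1}`.
Summing the geometric series gives the bound.
-/

section DependsOn

variable {ι : Type*} {α : ι → Type*}

lemma dependsOn_of_forall_imp {P : (∀ i, α i) → Prop} {U : Set ι}
    (h : ∀ ⦃x y⦄, (∀ i ∈ U, x i = y i) → P x → P y) : DependsOn P U :=
  fun _ _ hxy => propext ⟨h hxy, h fun i hi => (hxy i hi).symm⟩

lemma _root_.DependsOn.preimage_update [DecidableEq ι] {U : Set ι} {X : Set (∀ i, α i)}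
    {i : ι} (hX : DependsOn (· ∈ X) (insert i U)) (y : α i) :
    DependsOn (· ∈ (Function.update · i y) ⁻¹' X) U := by
  refine fun x x' hxx' => hX fun j hj => ?_
  rcases eq_or_ne j i with rfl | hne
  · simp
  · simp only [Function.update_of_ne hne]
    exact hxx' j (hj.resolve_left hne)

lemma dependsOn_mem_coord {β : Type*} (i : ι) (b : β) :
    DependsOn (· ∈ {x : ι → β | x i = b}) {i} :=
  fun _ _ hxy => congrArg (· = b) (hxy i rfl)

lemma dependsOn_mem_inter {U : Set ι} {X Y : Set (∀ i, α i)} (hX : DependsOn (· ∈ X) U)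
    (hY : DependsOn (· ∈ Y) U) : DependsOn (· ∈ X ∩ Y) U :=
  fun _ _ hxy => by simp only [Set.mem_inter_iff, hX hxy, hY hxy]

lemma dependsOn_mem_iInter {κ : Sort*} {U : Set ι} {X : κ → Set (∀ i, α i)}
    (hX : ∀ j, DependsOn (· ∈ X j) U) : DependsOn (· ∈ ⋂ j, X j) U :=
  fun _ _ hxy => by simp only [Set.mem_iInter, fun j => hX j hxy]

lemma eq_empty_or_univ_of_dependsOn_empty {X : Set (∀ i, α i)} (hX : DependsOn (· ∈ X) ∅) :
    X = ∅ ∨ X = Set.univ := by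
  rcases X.eq_empty_or_nonempty with hX₀ | ⟨x, hx⟩
  · exact Or.inl hX₀
  · exact Or.inr (Set.eq_univ_of_forall fun y => (hX.empty x y) ▸ hx)

end DependsOn

section Slices

variable [DecidableEq V]

lemma inter_eq_preimage_update_inter {X Z : Set (V → Bool)} {v : V} {c : Bool}
    (hZ : ∀ ω ∈ Z, ω v = c) : X ∩ Z = (Function.update · v c) ⁻¹' X ∩ Z := by
  ext ω
  refine and_congr_left fun hω => ?_
  rw [Set.mem_preimage, ← hZ ω hω, Function.update_eq_self]

lemma inter_coord_eq (X : Set (V → Bool)) (v : V) (c : Bool) :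
    X ∩ {ω | ω v = c} = (Function.update · v c) ⁻¹' X ∩ {ω | ω v = c} :=
  inter_eq_preimage_update_inter fun _ h => h

lemma cylinder_insert {F : Finset V} {v : V} (hv : v ∉ F) (b : V → Bool) (c : Bool) :
    {ω : V → Bool | ∀ u ∈ insert v F, ω u = Function.update b v c u} =
      {ω | ∀ u ∈ F, ω u = b u} ∩ {ω | ω v = c} := by
  ext ω
  simp only [Finset.forall_mem_insert, Function.update_self, Set.mem_ofPred_eq,
    Set.mem_inter_iff]
  rw [and_comm]
  refine and_congr_left fun _ => forall₂_congr fun u hu => ?_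
  rw [Function.update_of_ne (ne_of_mem_of_not_mem hu hv)]

end Slices

lemma nullMeasurableSet_of_measure_add_measure_compl {α : Type*} [MeasurableSpace α]
    {μ : Measure α} [IsFiniteMeasure μ] {s : Set α} (h : μ s + μ sᶜ = μ Set.univ) :
    NullMeasurableSet s μ := by
  set t := toMeasurable μ s
  have ht : MeasurableSet t := measurableSet_toMeasurable μ s
  have hst : s ⊆ t := subset_toMeasurable μ s
  have hsplit := measure_inter_add_sdiff (μ := μ) sᶜ ht
  rw [Set.sdiff_eq, Set.inter_eq_right.2 (Set.compl_subset_compl.2 hst),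
    measure_compl ht (measure_ne_top μ t), measure_toMeasurable, ← h,
    ENNReal.add_sub_cancel_left (measure_ne_top μ s)] at hsplit
  have hnull : μ (sᶜ ∩ t) = 0 := (ENNReal.add_left_inj (measure_ne_top μ sᶜ)).1 (by
    rw [hsplit, zero_add])
  refine ht.nullMeasurableSet.congr (ae_eq_set.2 ⟨?_, by simp [Set.sdiff_eq_empty.2 hst]⟩)
  rwa [Set.sdiff_eq, Set.inter_comm]

lemma measure_iUnion_inter_eq_mul_of_monotone {α : Type*} [MeasurableSpace α] {μ : Measure α}
    [IsFiniteMeasure μ] {Y : ℕ → Set α} {C : Set α} (hY : Monotone Y)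
    (h : ∀ n, μ (Y n ∩ C) = μ (Y n) * μ C) :
    μ ((⋃ n, Y n) ∩ C) = μ (⋃ n, Y n) * μ C := by
  have hlim := tendsto_measure_iUnion_atTop (μ := μ)
    fun m n hmn => Set.inter_subset_inter_left C (hY hmn)
  rw [Set.iUnion_inter]
  refine tendsto_nhds_unique hlim ?_
  simpa only [Function.comp_def, h] using
    ENNReal.Tendsto.mul_const (tendsto_measure_iUnion_atTop hY) (Or.inr (measure_ne_top μ C))

lemma measure_le_ofReal_one_sub {α : Type*} [MeasurableSpace α] {μ : Measure α}
    [IsProbabilityMeasure μ] {P : α → Prop} {c : ℝ} (hc : 0 ≤ c)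
    (hP : NullMeasurableSet {ω | ¬ P ω} μ) (h : ENNReal.ofReal c ≤ μ {ω | P ω}) :
    μ {ω | ¬ P ω} ≤ ENNReal.ofReal (1 - c) := by
  have hcompl : μ {ω | ¬ P ω} = 1 - μ {ω | P ω} := prob_compl_eq_one_sub₀ hP.of_compl
  rw [hcompl, ENNReal.ofReal_sub 1 hc, ENNReal.ofReal_one]
  exact tsub_le_tsub_left h 1

namespace IsBernoulli

variable [MeasurableSpace (V → Bool)] {μ : Measure (V → Bool)} {p : ℝ}

lemma measure_coord (hμ : IsBernoulli p μ) (v : V) (c : Bool) :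
    μ {ω | ω v = c} = ENNReal.ofReal (if c then p else 1 - p) := by
  simpa using hμ {v} fun _ => c

lemma measure_cylinder_insert [DecidableEq V] (hμ : IsBernoulli p μ) {F : Finset V} {v : V}
    (hv : v ∉ F) (b : V → Bool) (c : Bool) :
    μ {ω | ∀ u ∈ insert v F, ω u = Function.update b v c u} =
      μ {ω | ω v = c} * μ {ω | ∀ u ∈ F, ω u = b u} := by
  rw [hμ, hμ, measure_coord hμ, Finset.prod_insert hv, Function.update_self]
  congr 1
  exact Finset.prod_congr rfl fun u hu => by
    rw [Function.update_of_ne (ne_of_mem_of_not_mem hu hv)]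

variable [IsProbabilityMeasure μ]

-- Nothing is assumed about the σ-algebra on `V → Bool`: coordinate events are only null
-- measurable, because the measures of such an event and of its complement add up to one.
lemma nullMeasurableSet_coord (hμ : IsBernoulli p μ) (hp : p ∈ Set.Icc 0 1) (v : V)
    (c : Bool) : NullMeasurableSet {ω | ω v = c} μ := by
  refine nullMeasurableSet_of_measure_add_measure_compl ?_
  have hcompl : {ω : V → Bool | ω v = c}ᶜ = {ω | ω v = !c} := by
    ext ω; cases c <;> simp
  rw [hcompl, measure_coord hμ, measure_coord hμ, measure_univ,
    ← ENNReal.ofReal_add (by split_ifs <;> linarith [hp.1, hp.2])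
      (by split_ifs <;> linarith [hp.1, hp.2])]
  cases c <;> simp

lemma measure_eq_add_coord (hμ : IsBernoulli p μ) (hp : p ∈ Set.Icc 0 1) (s : Set (V → Bool))
    (v : V) : μ s = μ (s ∩ {ω | ω v = true}) + μ (s ∩ {ω | ω v = false}) := by
  rw [← measure_inter_add_sdiff₀ s (nullMeasurableSet_coord hμ hp v true)]
  congr 2
  ext ω
  simp

theorem nullMeasurableSet_of_dependsOn (hμ : IsBernoulli p μ) (hp : p ∈ Set.Icc 0 1)
    {U : Set V} (hU : U.Finite) {X : Set (V → Bool)} (hX : DependsOn (· ∈ X) U) :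
    NullMeasurableSet X μ := by
  classical
  induction U, hU using Set.Finite.induction_on generalizing X with
  | empty =>
    rcases eq_empty_or_univ_of_dependsOn_empty hX with rfl | rfl
    exacts [nullMeasurableSet_empty, nullMeasurableSet_univ]
  | @insert v U _ _ ih =>
    have hslice (c : Bool) : NullMeasurableSet (X ∩ {ω | ω v = c}) μ := by
      rw [inter_coord_eq]
      exact (ih (hX.preimage_update c)).inter (nullMeasurableSet_coord hμ hp v c)
    have hX₂ : X = (X ∩ {ω | ω v = true}) ∪ (X ∩ {ω | ω v = false}) := by
      ext ω; cases h : ω v <;> simp [h]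
    rw [hX₂]
    exact (hslice true).union (hslice false)

theorem measure_inter_cylinder (hμ : IsBernoulli p μ) (hp : p ∈ Set.Icc 0 1)
    {U : Set V} (hU : U.Finite) {X : Set (V → Bool)} (hX : DependsOn (· ∈ X) U)
    {F : Finset V} (hUF : Disjoint U F) (b : V → Bool) :
    μ (X ∩ {ω | ∀ u ∈ F, ω u = b u}) = μ X * μ {ω | ∀ u ∈ F, ω u = b u} := by
  classical
  induction U, hU using Set.Finite.induction_on generalizing X F b with
  | empty =>
    rcases eq_empty_or_univ_of_dependsOn_empty hX with rfl | rfl <;> simp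
  | @insert v U hv _ ih =>
    set X' : Bool → Set (V → Bool) := fun c => (Function.update · v c) ⁻¹' X
    have key : ∀ {F : Finset V}, Disjoint (insert v U) F → ∀ b : V → Bool,
        μ (X ∩ {ω | ∀ u ∈ F, ω u = b u}) =
          (μ (X' true) * μ {ω | ω v = true} + μ (X' false) * μ {ω | ω v = false}) *
            μ {ω | ∀ u ∈ F, ω u = b u} := by
      intro F hUF b
      have hvF : v ∉ F := fun h => Set.disjoint_left.1 hUF (Set.mem_insert v U) h
      have hUF' : Disjoint U ↑(insert v F) := by
        rw [Finset.coe_insert, Set.disjoint_insert_right]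
        exact ⟨hv, hUF.mono_left (Set.subset_insert v U)⟩
      have hslice (c : Bool) : X ∩ {ω | ∀ u ∈ F, ω u = b u} ∩ {ω | ω v = c} =
          X' c ∩ {ω | ∀ u ∈ insert v F, ω u = Function.update b v c u} := by
        rw [cylinder_insert hvF, Set.inter_assoc, inter_eq_preimage_update_inter fun _ h => h.2]
      rw [measure_eq_add_coord hμ hp _ v, hslice, hslice,
        ih (hX.preimage_update true) hUF', ih (hX.preimage_update false) hUF',
        measure_cylinder_insert hμ hvF, measure_cylinder_insert hμ hvF]
      ring
    -- for `F = ∅` the identity `key` says that the bracket is `μ X`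
    have hμX := key (F := ∅) (by simp) b
    simp only [Finset.notMem_empty, IsEmpty.forall_iff, implies_true, Set.ofPred_true,
      Set.inter_univ, measure_univ, mul_one] at hμX
    rw [key hUF b, ← hμX]

lemma measure_inter_coord (hμ : IsBernoulli p μ) (hp : p ∈ Set.Icc 0 1)
    {U : Set V} (hU : U.Finite) {X : Set (V → Bool)} (hX : DependsOn (· ∈ X) U) {v : V}
    (hv : v ∉ U) (c : Bool) : μ (X ∩ {ω | ω v = c}) = μ X * μ {ω | ω v = c} := by
  simpa using measure_inter_cylinder hμ hp hU hX (F := {v}) (by simpa using hv) fun _ => c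

theorem measure_inter_eq_mul (hμ : IsBernoulli p μ) (hp : p ∈ Set.Icc 0 1)
    {U₁ U₂ : Set V} (hU₁ : U₁.Finite) (hU₂ : U₂.Finite) (hU : Disjoint U₁ U₂)
    {X Y : Set (V → Bool)} (hX : DependsOn (· ∈ X) U₁) (hY : DependsOn (· ∈ Y) U₂) :
    μ (X ∩ Y) = μ X * μ Y := by
  classical
  induction U₂, hU₂ using Set.Finite.induction_on generalizing U₁ X Y with
  | empty =>
    rcases eq_empty_or_univ_of_dependsOn_empty hY with rfl | rfl <;> simp
  | @insert v U₂ hv hU₂ ih =>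
    have hvU₁ : v ∉ U₁ := fun h => Set.disjoint_right.1 hU (Set.mem_insert v U₂) h
    set Y' : Bool → Set (V → Bool) := fun c => (Function.update · v c) ⁻¹' Y
    have hY' (c : Bool) : μ (Y ∩ {ω | ω v = c}) = μ (Y' c) * μ {ω | ω v = c} := by
      rw [inter_coord_eq, measure_inter_coord hμ hp hU₂ (hY.preimage_update c) hv]
    have hXY' (c : Bool) : μ (X ∩ Y ∩ {ω | ω v = c}) = μ X * μ {ω | ω v = c} * μ (Y' c) := by
      have hX' : DependsOn (· ∈ X ∩ {ω | ω v = c}) (insert v U₁) :=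
        dependsOn_mem_inter (hX.mono (Set.subset_insert v U₁))
          ((dependsOn_mem_coord v c).mono
            (Set.singleton_subset_iff.2 (Set.mem_insert v U₁)))
      rw [Set.inter_assoc, inter_coord_eq Y, ← Set.inter_assoc, Set.inter_right_comm,
        ih (X := X ∩ {ω | ω v = c}) (Y := Y' c) (hU₁.insert v)
          (Set.disjoint_insert_left.2 ⟨hv, hU.mono_right (Set.subset_insert v U₂)⟩)
          hX' (hY.preimage_update c), measure_inter_coord hμ hp hU₁ hX hvU₁]
    rw [measure_eq_add_coord hμ hp _ v, hXY', hXY', measure_eq_add_coord hμ hp Y v, hY', hY']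
    ring

end IsBernoulli

section Chain

variable {α : Type*} {k : ℕ}

def chainEvent (A : Fin k → Set α) (i : ℕ) : Set α := ⋂ (j : Fin k) (_ : (j : ℕ) < i), A j

lemma chainEvent_zero (A : Fin k → Set α) : chainEvent A 0 = Set.univ := by
  simp [chainEvent]

lemma chainEvent_succ (A : Fin k → Set α) {i : ℕ} (hi : i < k) :
    chainEvent A (i + 1) = A ⟨i, hi⟩ ∩ chainEvent A i := by
  ext ω
  simp only [chainEvent, Set.mem_iInter, Set.mem_inter_iff]
  constructor
  · exact fun h => ⟨h _ (Nat.lt_succ_self i), fun j hj => h j (Nat.lt_succ_of_lt hj)⟩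
  · rintro ⟨hi', h⟩ j hj
    rcases Nat.lt_succ_iff_lt_or_eq.1 hj with hj | hj
    · exact h j hj
    · obtain rfl : j = ⟨i, hi⟩ := Fin.ext hj
      exact hi'

lemma iInter_subset_chainEvent_union (A E : Fin k → Set α) :
    ⋂ j, E j ⊆ chainEvent A k ∪ ⋃ j, (E j \ A j) ∩ chainEvent A j := by
  intro ω hω
  by_cases hA : ∀ j, ω ∈ A j
  · exact Or.inl (Set.mem_iInter₂.2 fun j _ => hA j)
  push Not at hA
  obtain ⟨j, hj, hmin⟩ := Set.exists_min_image {j | ω ∉ A j} id (Set.toFinite _) hA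
  refine Or.inr (Set.mem_iUnion.2
    ⟨j, ⟨Set.mem_iInter.1 hω j, hj⟩, Set.mem_iInter₂.2 fun l hl => ?_⟩)
  by_contra hl'
  exact absurd (hmin l hl') (not_le.2 hl)

variable [MeasurableSpace α] {μ : Measure α}

lemma measure_chainEvent_le [IsProbabilityMeasure μ] {A : Fin k → Set α} {x : ℝ≥0∞}
    (hA : ∀ j, μ (A j) ≤ x)
    (hAC : ∀ j, μ (A j ∩ chainEvent A j) = μ (A j) * μ (chainEvent A j)) :
    ∀ i ≤ k, μ (chainEvent A i) ≤ x ^ i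
  | 0, _ => by simp [chainEvent_zero]
  | i + 1, hi => by
    rw [chainEvent_succ A hi, hAC ⟨i, hi⟩, pow_succ']
    exact mul_le_mul' (hA _) (measure_chainEvent_le hA hAC i (Nat.le_of_succ_le hi))

lemma measure_sdiff_inter_le [IsFiniteMeasure μ] {A E C : Set α} {d : ℝ≥0∞} (hAE : A ⊆ E)
    (hA : NullMeasurableSet A μ) (hEA : μ E ≤ (1 + d) * μ A)
    (hAC : μ (A ∩ C) = μ A * μ C) (hEC : μ (E ∩ C) = μ E * μ C) :
    μ ((E \ A) ∩ C) ≤ d * (μ A * μ C) := by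
  have hsplit : μ (A ∩ C) + μ ((E \ A) ∩ C) = μ E * μ C := by
    rw [← hEC, ← measure_inter_add_sdiff₀ (E ∩ C) hA, Set.inter_right_comm,
      Set.inter_eq_right.2 hAE, Set.sdiff_inter_right_comm]
  refine (ENNReal.add_le_add_iff_left (measure_ne_top μ (A ∩ C))).1 ?_
  calc μ (A ∩ C) + μ ((E \ A) ∩ C) = μ E * μ C := hsplit
    _ ≤ (1 + d) * μ A * μ C := by gcongr
    _ = μ (A ∩ C) + d * (μ A * μ C) := by rw [hAC]; ring

theorem measure_iInter_le_of_chain [IsProbabilityMeasure μ] {A E : Fin k → Set α}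
    {x d : ℝ≥0∞} (hAE : ∀ j, A j ⊆ E j) (hA : ∀ j, NullMeasurableSet (A j) μ)
    (hEx : ∀ j, μ (E j) ≤ x) (hEA : ∀ j, μ (E j) ≤ (1 + d) * μ (A j))
    (hAC : ∀ j, μ (A j ∩ chainEvent A j) = μ (A j) * μ (chainEvent A j))
    (hEC : ∀ j, μ (E j ∩ chainEvent A j) = μ (E j) * μ (chainEvent A j)) :
    μ (⋂ j, E j) ≤ x ^ k + d * (x * (1 - x)⁻¹) := by
  have hAx (j : Fin k) : μ (A j) ≤ x := (measure_mono (hAE j)).trans (hEx j)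
  have hbad (j : Fin k) : μ ((E j \ A j) ∩ chainEvent A j) ≤ d * x ^ ((j : ℕ) + 1) := by
    refine (measure_sdiff_inter_le (hAE j) (hA j) (hEA j) (hAC j) (hEC j)).trans ?_
    rw [pow_succ']
    gcongr
    exacts [hAx j, measure_chainEvent_le hAx hAC j j.2.le]
  calc μ (⋂ j, E j) ≤ μ (chainEvent A k) + ∑ j, μ ((E j \ A j) ∩ chainEvent A j) :=
        (measure_mono (iInter_subset_chainEvent_union A E)).trans <|
          (measure_union_le _ _).trans (add_le_add le_rfl (measure_iUnion_fintype_le μ _))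
    _ ≤ x ^ k + ∑ j : Fin k, d * x ^ ((j : ℕ) + 1) :=
        add_le_add (measure_chainEvent_le hAx hAC k le_rfl) (Finset.sum_le_sum fun j _ => hbad j)
    _ ≤ x ^ k + d * (x * (1 - x)⁻¹) := by
        rw [← Finset.mul_sum, Fin.sum_univ_eq_sum_range (fun i => x ^ (i + 1)),
          ← ENNReal.tsum_geometric_add_one]
        gcongr
        exact ENNReal.sum_le_tsum _

end Chain

lemma one_sub_div_rpow_mem_Ioo {p p₁ ε : ℝ} (hp : p < 1) (hp₁ : p₁ < p) (hε : ε < 1) :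
    1 - ((1 - p) / (1 - p₁)) ^ (1 - ε) ∈ Set.Ioo 0 1 := by
  have hr₀ : 0 < (1 - p) / (1 - p₁) := div_pos (by linarith) (by linarith)
  have hr₁ : (1 - p) / (1 - p₁) < 1 := (div_lt_one (by linarith)).2 (by linarith)
  constructor
  · linarith [Real.rpow_lt_one hr₀.le hr₁ (by linarith : 0 < 1 - ε)]
  · linarith [Real.rpow_pos_of_pos hr₀ (1 - ε)]

lemma ofReal_pow_add_mul_geometric_le {c δ : ℝ} (hc₀ : 0 < c) (hc₁ : c ≤ 1) (hδ : 0 ≤ δ)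
    (k : ℕ) :
    ENNReal.ofReal (1 - c) ^ k +
        ENNReal.ofReal δ * (ENNReal.ofReal (1 - c) * (1 - ENNReal.ofReal (1 - c))⁻¹) ≤
      ENNReal.ofReal (δ * (1 - c) / c + (1 + δ) * (1 - c) ^ k) := by
  have h1c : 0 ≤ 1 - c := sub_nonneg.2 hc₁
  have hinv : (1 - ENNReal.ofReal (1 - c))⁻¹ = ENNReal.ofReal c⁻¹ := by
    rw [← ENNReal.ofReal_one, ← ENNReal.ofReal_sub _ h1c, sub_sub_cancel,
      ENNReal.ofReal_inv_of_pos hc₀]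
  rw [hinv, ← ENNReal.ofReal_pow h1c, ← ENNReal.ofReal_mul h1c, ← ENNReal.ofReal_mul hδ,
    ← ENNReal.ofReal_add (pow_nonneg h1c k) (by positivity)]
  refine ENNReal.ofReal_le_ofReal ?_
  rw [← mul_assoc, ← div_eq_mul_inv]
  nlinarith [mul_nonneg hδ (pow_nonneg h1c k)]

section Graphs

variable {G H : SimpleGraph V}

def openCluster (H : SimpleGraph V) (ω : V → Bool) (v : V) : Set V :=
  {u | (openGraph H ω).Reachable v u}

lemma openGraph_mono (h : H ≤ G) (ω : V → Bool) : openGraph H ω ≤ openGraph G ω :=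
  fun _ _ hab => ⟨h hab.1, hab.2⟩

lemma openGraph_le (G : SimpleGraph V) (ω : V → Bool) : openGraph G ω ≤ G := fun _ _ hab => hab.1

lemma openGraph_congr {ω ω' : V → Bool} (h : ∀ ⦃a b⦄, H.Adj a b → ω a = ω' a) :
    openGraph H ω = openGraph H ω' := by
  ext a b
  exact and_congr_right fun hab => by rw [h hab, h hab.symm]

lemma ConnInfty.mono {ω : V → Bool} {v : V} (h : H ≤ G) (hH : ConnInfty H ω v) :
    ConnInfty G ω v :=
  ⟨hH.1, hH.2.mono fun _ hu => hu.mono (openGraph_mono h ω)⟩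

lemma exists_exit_of_walk {Q : Set V} : ∀ {a b : V} (_ : H.Walk a b), a ∈ Q → b ∉ Q →
    ∃ y z, y ∈ Q ∧ z ∉ Q ∧ H.Adj y z ∧ (restrictGraph H Q).Reachable a y
  | _, _, .nil, ha, hb => absurd ha hb
  | a, _, .cons (v := c) hac q, ha, hb => by
    by_cases hc : c ∈ Q
    · obtain ⟨y, z, hy, hz, hyz, hcy⟩ := exists_exit_of_walk q hc hb
      exact ⟨y, z, hy, hz, hyz,
        (SimpleGraph.Adj.reachable (G := restrictGraph H Q) ⟨hac, ha, hc⟩).trans hcy⟩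
    · exact ⟨a, c, ha, hc, hac, .refl a⟩

lemma mem_ball_self (v : V) (D : ℕ) : v ∈ ball G v D := ⟨.refl v, by simp⟩

lemma ball_mono (v : V) {D D' : ℕ} (h : D ≤ D') : ball G v D ⊆ ball G v D' :=
  fun _ hu => ⟨hu.1, hu.2.trans h⟩

lemma mem_ball_succ_of_adj {v y z : V} {n : ℕ} (hy : y ∈ ball G v n) (hyz : G.Adj y z) :
    z ∈ ball G v (n + 1) := by
  refine ⟨hy.1.trans hyz.reachable, (hyz.reachable.dist_triangle_right v).trans ?_⟩
  rw [SimpleGraph.dist_eq_one_iff_adj.2 hyz]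
  exact Nat.add_le_add_right hy.2 1

lemma ball_zero (v : V) : ball G v 0 = {v} := by
  refine Set.Subset.antisymm (fun u ⟨huv, hd⟩ => ?_)
    (Set.singleton_subset_iff.2 (mem_ball_self v 0))
  obtain ⟨p, hp⟩ := huv.exists_walk_length_eq_dist
  cases p with
  | nil => rfl
  | cons _ q => rw [SimpleGraph.Walk.length_cons] at hp; omega

lemma ball_succ_subset (v : V) (D : ℕ) :
    ball G v (D + 1) ⊆ insert v (⋃ y ∈ G.neighborSet v, ball G y D) := by
  rintro u ⟨huv, hd⟩
  obtain ⟨p, hp⟩ := huv.exists_walk_length_eq_dist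
  cases p with
  | nil => exact Set.mem_insert _ _
  | cons hvy q =>
    refine Or.inr (Set.mem_biUnion hvy ⟨q.reachable, (SimpleGraph.dist_le q).trans ?_⟩)
    rw [SimpleGraph.Walk.length_cons] at hp
    omega

lemma ball_finite (G : SimpleGraph V) [G.LocallyFinite] (v : V) (D : ℕ) : (ball G v D).Finite := by
  induction D generalizing v with
  | zero => simp [ball_zero]
  | succ D ih =>
    exact (((G.neighborSet v).toFinite.biUnion fun y _ => ih y).insert v).subset
      (ball_succ_subset v D)

lemma connWithin_ball_of_connInfty [G.LocallyFinite] (hHG : H ≤ G) {ω : V → Bool} {v : V}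
    (D : ℕ) (h : ConnInfty H ω v) : ConnWithin H (ball G v D) ω v (innerBoundary G v D) := by
  obtain ⟨u, ⟨p⟩, hu⟩ := (h.2.sdiff (ball_finite G v D)).nonempty
  obtain ⟨y, z, hy, hz, hyz, hvy⟩ := exists_exit_of_walk p (mem_ball_self v D) hu
  refine ⟨y, ⟨hy, z, hHG hyz.1, hz⟩, hvy.mono ?_⟩
  rintro a b ⟨⟨hab, ha, hb⟩, haQ, hbQ⟩
  exact ⟨⟨hab, haQ, hbQ⟩, ha, hb⟩

lemma setOf_not_connInfty_eq_iUnion [G.LocallyFinite] (hHG : H ≤ G) (v : V) :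
    {ω | ¬ ConnInfty H ω v} = ⋃ n, {ω | ω v = true → openCluster H ω v ⊆ ball G v n} := by
  ext ω
  simp only [Set.mem_ofPred_eq, Set.mem_iUnion]
  constructor
  · intro h
    by_cases hv : ω v = true
    · have hfin : (openCluster H ω v).Finite := Set.not_infinite.1 fun hinf => h ⟨hv, hinf⟩
      refine ⟨hfin.toFinset.sup (G.dist v), fun _ u hu =>
        ⟨hu.mono ((openGraph_mono hHG ω).trans (openGraph_le G ω)),
          Finset.le_sup (hfin.mem_toFinset.2 hu)⟩⟩
    · exact ⟨0, fun hv' => absurd hv' hv⟩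
  · rintro ⟨n, hn⟩ ⟨hv, hinf⟩
    exact hinf ((ball_finite G v n).subset (hn hv))

lemma dependsOn_connWithin {A T U : Set V} {v : V}
    (hU : ∀ ⦃a b⦄, (restrictGraph H A).Adj a b → a ∈ U) :
    DependsOn (fun ω => ConnWithin H A ω v T) U := fun _ _ h => by
  simp only [ConnWithin, openGraph_congr fun a _ hab => h a (hU hab)]

lemma dependsOn_openCluster_subset {Q U : Set V} {v : V} (hv : v ∈ U)
    (hU : ∀ ⦃a b⦄, H.Adj a b → a ∈ Q → a ∈ U ∧ b ∈ U) :
    DependsOn (fun ω => ω v = true → openCluster H ω v ⊆ Q) U := by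
  refine dependsOn_of_forall_imp fun ω ω' h hω hv' u hu => ?_
  have hvω : ω v = true := (h v hv).trans hv'
  by_contra huQ
  obtain ⟨p⟩ := hu
  obtain ⟨y, z, hy, hz, hyz, hvy⟩ := exists_exit_of_walk p (hω hvω (.refl v)) huQ
  -- open edges of `ω'` starting in `Q` only involve sites where `ω` and `ω'` agree
  have hopen : ∀ ⦃a b⦄, (openGraph H ω').Adj a b → a ∈ Q → (openGraph H ω).Adj a b :=
    fun a b hab ha => ⟨hab.1, (h a (hU hab.1 ha).1).trans hab.2.1,
      (h b (hU hab.1 ha).2).trans hab.2.2⟩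
  have hyω : (openGraph H ω).Reachable v y :=
    hvy.mono (fun a b hab => hopen hab.1 hab.2.1 : restrictGraph (openGraph H ω') Q ≤ _)
  exact hz (hω hvω (hyω.trans (hopen hyz hy).reachable))

end Graphs

section Packing

variable (G : SimpleGraph V) {k : ℕ} (w : Fin k → V) (D : Fin k → ℕ)

def removedSet (i : ℕ) : Set V := ⋃ j ∈ {j : Fin k | (j : ℕ) < i}, ball G (w j) (D j)

def disconnBall (j : Fin k) : Set (V → Bool) :=
  {ω | ¬ ConnWithin (punctured G w D j) (ball G (w j) (D j)) ω (w j)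
    (innerBoundary G (w j) (D j))}

def disconnInfty (j : Fin k) : Set (V → Bool) :=
  {ω | ¬ ConnInfty (punctured G w D j) ω (w j)}

lemma punctured_le (i : ℕ) : punctured G w D i ≤ G := fun _ _ h => h.1

lemma removedSet_finite [G.LocallyFinite] (i : ℕ) : (removedSet G w D i).Finite :=
  (Set.toFinite _).biUnion fun j _ => ball_finite G (w j) (D j)

lemma dependsOn_disconnBall (j : Fin k) :
    DependsOn (· ∈ disconnBall G w D j) (ball G (w j) (D j) \ removedSet G w D j) :=
  fun _ _ h => congrArg Not <|
    dependsOn_connWithin (H := punctured G w D j) (A := ball G (w j) (D j))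
      (U := ball G (w j) (D j) \ removedSet G w D j)
      (fun _ _ hab => ⟨hab.2.1, hab.1.2.1⟩) h

lemma dependsOn_chainEvent (i : ℕ) :
    DependsOn (· ∈ chainEvent (disconnBall G w D) i) (removedSet G w D i) :=
  dependsOn_mem_iInter fun j => dependsOn_mem_iInter fun hj =>
    (dependsOn_disconnBall G w D j).mono
      (Set.sdiff_subset.trans (Set.subset_biUnion_of_mem (u := fun j => ball G (w j) (D j)) hj))

lemma dependsOn_openCluster_subset_ball {j : Fin k} (hw : w j ∉ removedSet G w D j) (n : ℕ) :
    DependsOn (fun ω => ω (w j) = true → openCluster (punctured G w D j) ω (w j) ⊆ ball G (w j) n)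
      (ball G (w j) (n + 1) \ removedSet G w D j) :=
  dependsOn_openCluster_subset ⟨mem_ball_self _ _, hw⟩ fun _ _ hab ha =>
    ⟨⟨ball_mono _ n.le_succ ha, hab.2.1⟩, ⟨mem_ball_succ_of_adj ha hab.1, hab.2.2⟩⟩

lemma setOf_forall_not_connInfty_subset {S : Set V} (hw : ∀ j, w j ∈ S) :
    {ω | ∀ v ∈ S, ¬ ConnInfty G ω v} ⊆ ⋂ j, disconnInfty G w D j :=
  fun _ hω => Set.mem_iInter.2 fun j h => hω (w j) (hw j) (h.mono (punctured_le G w D j))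

variable [G.LocallyFinite]

lemma disconnBall_subset_disconnInfty (j : Fin k) :
    disconnBall G w D j ⊆ disconnInfty G w D j :=
  fun _ hω h => hω (connWithin_ball_of_connInfty (punctured_le G w D j) _ h)

lemma disconnInfty_eq_iUnion (j : Fin k) :
    disconnInfty G w D j = ⋃ n, {ω | ω (w j) = true →
      openCluster (punctured G w D j) ω (w j) ⊆ ball G (w j) n} :=
  setOf_not_connInfty_eq_iUnion (punctured_le G w D j) (w j)

variable [MeasurableSpace (V → Bool)] {μ : Measure (V → Bool)} [IsProbabilityMeasure μ] {p : ℝ}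

lemma nullMeasurableSet_disconnBall (hμ : IsBernoulli p μ) (hp : p ∈ Set.Icc 0 1)
    (j : Fin k) : NullMeasurableSet (disconnBall G w D j) μ :=
  hμ.nullMeasurableSet_of_dependsOn hp ((ball_finite G _ _).sdiff) (dependsOn_disconnBall G w D j)

lemma nullMeasurableSet_disconnInfty (hμ : IsBernoulli p μ) (hp : p ∈ Set.Icc 0 1)
    {j : Fin k} (hw : w j ∉ removedSet G w D j) : NullMeasurableSet (disconnInfty G w D j) μ := by
  rw [disconnInfty_eq_iUnion]
  exact .iUnion fun n => hμ.nullMeasurableSet_of_dependsOn hp ((ball_finite G _ _).sdiff)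
    (dependsOn_openCluster_subset_ball G w D hw n)

lemma measure_disconnBall_inter_chainEvent (hμ : IsBernoulli p μ) (hp : p ∈ Set.Icc 0 1)
    (j : Fin k) :
    μ (disconnBall G w D j ∩ chainEvent (disconnBall G w D) j) =
      μ (disconnBall G w D j) * μ (chainEvent (disconnBall G w D) j) :=
  hμ.measure_inter_eq_mul hp ((ball_finite G _ _).sdiff) (removedSet_finite G w D j)
    Set.disjoint_sdiff_left (dependsOn_disconnBall G w D j) (dependsOn_chainEvent G w D j)

lemma measure_disconnInfty_inter_chainEvent (hμ : IsBernoulli p μ) (hp : p ∈ Set.Icc 0 1)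
    {j : Fin k} (hw : w j ∉ removedSet G w D j) :
    μ (disconnInfty G w D j ∩ chainEvent (disconnBall G w D) j) =
      μ (disconnInfty G w D j) * μ (chainEvent (disconnBall G w D) j) := by
  rw [disconnInfty_eq_iUnion]
  refine measure_iUnion_inter_eq_mul_of_monotone
    (fun m n hmn ω hω hv => (hω hv).trans (ball_mono _ hmn)) fun n => ?_
  exact hμ.measure_inter_eq_mul hp ((ball_finite G _ _).sdiff) (removedSet_finite G w D j)
    Set.disjoint_sdiff_left (dependsOn_openCluster_subset_ball G w D hw n)
    (dependsOn_chainEvent G w D j)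

end Packing

theorem supercritical_disconnection_general {V : Type*} [MeasurableSpace (V → Bool)]
    (G : SimpleGraph V) (hlf : G.LocallyFinite)
    (p : ℝ) (hp : p ∈ Set.Ioo (0:ℝ) 1)
    (μ : Measure (V → Bool)) [IsProbabilityMeasure μ] (hμ : IsBernoulli p μ)
    (S : Set V) (p₁ ε' δ c : ℝ)
    (hp₁ : p₁ ∈ Set.Ioo (pcSite G (V := V)) p) (hε' : ε' ∈ Set.Ioo (0:ℝ) 1)
    (hδ : δ ∈ Set.Ioo (0:ℝ) 1)
    (hc : c = 1 - ((1 - p) / (1 - p₁)) ^ (1 - ε'))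
    (k : ℕ) (hpk : ∃ (w : Fin k → V) (D : Fin k → ℕ), IsPacking G μ δ c S k w D) :
    μ {ω | ∀ v ∈ S, ¬ ConnInfty G ω v} ≤
      ENNReal.ofReal (δ * (1 - c) / c + (1 + δ) * (1 - c) ^ k) := by
  obtain ⟨w, D, hmem, hsep, hprob⟩ := hpk
  obtain ⟨hc₀, hc₁⟩ : c ∈ Set.Ioo 0 1 := hc ▸ one_sub_div_rpow_mem_Ioo hp.2 hp₁.2 hε'.2
  have hp' : p ∈ Set.Icc 0 1 := Set.Ioo_subset_Icc_self hp
  have hA := nullMeasurableSet_disconnBall G w D hμ hp'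
  have hE (j : Fin k) := nullMeasurableSet_disconnInfty G w D hμ hp' (hsep j)
  have hδ' : ENNReal.ofReal (1 + δ) = 1 + ENNReal.ofReal δ := by
    rw [ENNReal.ofReal_add zero_le_one hδ.1.le, ENNReal.ofReal_one]
  calc μ {ω | ∀ v ∈ S, ¬ ConnInfty G ω v} ≤ μ (⋂ j, disconnInfty G w D j) :=
        measure_mono (setOf_forall_not_connInfty_subset G w D hmem)
    _ ≤ ENNReal.ofReal (1 - c) ^ k + ENNReal.ofReal δ *
          (ENNReal.ofReal (1 - c) * (1 - ENNReal.ofReal (1 - c))⁻¹) :=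
        measure_iInter_le_of_chain (disconnBall_subset_disconnInfty G w D) hA
          (fun j => measure_le_ofReal_one_sub hc₀.le (hE j) (hprob j).2.2)
          (fun j => hδ' ▸ (hprob j).2.1)
          (measure_disconnBall_inter_chainEvent G w D hμ hp')
          (fun j => measure_disconnInfty_inter_chainEvent G w D hμ hp' (hsep j))
    _ ≤ _ := ofReal_pow_add_mul_geometric_le hc₀ hc₁.le hδ.1.le k

/-- **Quantitative supercritical disconnection bound** (Theorem 1.1 / Lemma 2.4, with
packing number at least `k`): with `c = 1 - ((1-p)/(1-p₁))^{1-ε'}` for some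
`p₁ ∈ (p_c, p)`, `ε' ∈ (0,1)`, and `δ ∈ (0,1)`, if `S` admits a `(p,δ,c)`-packing of
size `k` then `P_p(S ↮ ∞) ≤ δ(1-c)/c + (1+δ)(1-c)^k`. -/
theorem supercritical_disconnection {V : Type*} [MeasurableSpace (V → Bool)]
    (G : SimpleGraph V) [Infinite V] (hconn : G.Connected) (hlf : G.LocallyFinite)
    (p : ℝ) (hp : p ∈ Set.Ioo (0:ℝ) 1) (hpc : pcSite G (V := V) < p)
    (μ : Measure (V → Bool)) [IsProbabilityMeasure μ] (hμ : IsBernoulli p μ)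
    (S : Set V) (p₁ ε' δ c : ℝ)
    (hp₁ : p₁ ∈ Set.Ioo (pcSite G (V := V)) p) (hε' : ε' ∈ Set.Ioo (0:ℝ) 1)
    (hδ : δ ∈ Set.Ioo (0:ℝ) 1)
    (hc : c = 1 - ((1 - p) / (1 - p₁)) ^ (1 - ε'))
    (k : ℕ) (hpk : ∃ (w : Fin k → V) (D : Fin k → ℕ), IsPacking G μ δ c S k w D) :
    μ {ω | ∀ v ∈ S, ¬ ConnInfty G ω v} ≤
      ENNReal.ofReal (δ * (1 - c) / c + (1 + δ) * (1 - c) ^ k) :=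
  supercritical_disconnection_general G hlf p hp μ hμ S p₁ ε' δ c hp₁ hε' hδ hc k hpk

end Percolation
end
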